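/- Let (γ; b, σ, d, κ, 𝗄; π, ρ) be admissible parameters. For every q ∈ (0,∞) and r ∈ (0,1), let f_{q,r}(x,ℓ) := e^{−qx} r^ℓ. Then for every (x,ℓ) ∈ [0,∞)×ℤ₊, ℒf_{q,r}(x,ℓ) = x e^{−qx} r^ℓ · Ψ_c(q,r) + ℓ e^{−qx} r^{ℓ−1} · Ψ_d(q,r), where all the series and integrals involved converge absolutely. -/

import Mathlib

open MeasureTheory Set


lemma exp_neg_le_quadratic {t : ℝ} (ht : 0 ≤ t) : Real.exp (-t) ≤ 1 - t + t ^ 2 / 2 := by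
  have hF : ∀ u : ℝ, HasDerivAt (fun u => 1 - u + u ^ 2 / 2 - Real.exp (-u))
      (-1 + u + Real.exp (-u)) u := by
    intro u
    have h1 : HasDerivAt (fun u : ℝ => Real.exp (-u)) (Real.exp (-u) * (-1)) u :=
      (Real.hasDerivAt_exp (-u)).comp u (hasDerivAt_neg u)
    have h2 : HasDerivAt (fun u : ℝ => 1 - u + u ^ 2 / 2) (-1 + u) u := by
      have h4 := ((hasDerivAt_const u (1 : ℝ)).sub (hasDerivAt_id u)).add
        ((hasDerivAt_pow 2 u).div_const 2)
      exact h4.congr_deriv (by norm_num)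
    have := h2.sub h1
    exact this.congr_deriv (by ring)
  have hmono : MonotoneOn (fun u : ℝ => 1 - u + u ^ 2 / 2 - Real.exp (-u)) (Ici 0) := by
    apply monotoneOn_of_deriv_nonneg (convex_Ici 0)
    · exact Continuous.continuousOn (by continuity)
    · intro s _; exact (hF s).differentiableAt.differentiableWithinAt
    · intro s _
      rw [(hF s).deriv]
      have := Real.add_one_le_exp (-s); linarith
  have h := hmono self_mem_Ici ht ht
  simp only [Real.exp_zero] at h
  norm_num at h
  linarith

lemma prod_univ_decomp :
    (Ici (0:ℝ) ×ˢ (univ : Set ℕ)) = Ici 0 ×ˢ ({0} : Set ℕ) ∪ Ici 0 ×ˢ {k : ℕ | 1 ≤ k} := by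
  rw [← prod_union]
  congr 1
  ext k
  simp [Nat.one_le_iff_ne_zero]
  tauto

lemma meas_g (q r c : ℝ) :
    Measurable (fun p : ℝ × ℕ =>
      Real.exp (-q * p.1) * r ^ p.2 - 1 + (if 0 < p.1 ∧ p.1 < 1 then c * p.1 else 0)) := by
  have h1 : Measurable fun p : ℝ × ℕ => Real.exp (-q * p.1) * r ^ p.2 :=
    (measurable_fst.const_mul (-q)).exp.mul
      ((measurable_from_top (f := fun k : ℕ => (r : ℝ) ^ k)).comp measurable_snd)
  have hset : MeasurableSet {p : ℝ × ℕ | 0 < p.1 ∧ p.1 < 1} :=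
    measurable_fst (measurableSet_Ioo (a := (0:ℝ)) (b := 1))
  exact (h1.sub measurable_const).add
    (Measurable.ite hset (measurable_fst.const_mul c) measurable_const)

lemma meas_S0 : MeasurableSet (Ici (0:ℝ) ×ˢ ({0} : Set ℕ)) :=
  measurableSet_Ici.prod (measurableSet_singleton 0)

lemma meas_S1 : MeasurableSet (Ici (0:ℝ) ×ˢ {k : ℕ | 1 ≤ k}) :=
  measurableSet_Ici.prod (MeasurableSet.of_discrete)

lemma integrableOn_g_pi {q r : ℝ} (hq : 0 < q) (hr0 : 0 < r) (hr1 : r < 1)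
    (π : Measure (ℝ × ℕ))
    (h0 : IntegrableOn (fun p : ℝ × ℕ => min 1 (p.1 ^ 2)) (Ici (0:ℝ) ×ˢ ({0} : Set ℕ)) π)
    (h1 : π (Ici (0:ℝ) ×ˢ {k : ℕ | 1 ≤ k}) < ⊤) :
    IntegrableOn (fun p : ℝ × ℕ =>
        Real.exp (-q * p.1) * r ^ p.2 - 1 + (if 0 < p.1 ∧ p.1 < 1 then q * p.1 else 0))
      (Ici (0:ℝ) ×ˢ (univ : Set ℕ)) π := by
  have hmeas := meas_g q r q
  rw [prod_univ_decomp]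
  apply IntegrableOn.union
  · apply Integrable.mono' (h0.const_mul (max 1 (q ^ 2 / 2)))
      hmeas.aestronglyMeasurable.restrict
    rw [ae_restrict_iff' meas_S0]
    filter_upwards with p hp
    obtain ⟨hy, hk⟩ := hp
    simp only [mem_singleton_iff] at hk
    simp only [mem_Ici] at hy
    rw [hk, pow_zero, mul_one, Real.norm_eq_abs]
    by_cases hc : 0 < p.1 ∧ p.1 < 1
    · rw [if_pos hc]
      have h2 : Real.exp (-(q * p.1)) ≤ 1 - q * p.1 + (q * p.1) ^ 2 / 2 :=
        exp_neg_le_quadratic (by positivity)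
      have h3 : 1 - q * p.1 ≤ Real.exp (-(q * p.1)) := by
        have := Real.add_one_le_exp (-(q * p.1)); linarith
      rw [neg_mul] at *
      have hmin : min 1 (p.1 ^ 2) = p.1 ^ 2 := min_eq_right (by nlinarith [hc.1, hc.2])
      rw [hmin, abs_of_nonneg (by linarith)]
      have h5 : q ^ 2 / 2 * p.1 ^ 2 ≤ max 1 (q ^ 2 / 2) * p.1 ^ 2 :=
        mul_le_mul_of_nonneg_right (le_max_right _ _) (sq_nonneg _)
      nlinarith
    · rw [if_neg hc, add_zero]
      have hexp1 : Real.exp (-q * p.1) ≤ 1 := by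
        rw [Real.exp_le_one_iff]; nlinarith
      have hexp0 : 0 < Real.exp (-q * p.1) := Real.exp_pos _
      rcases eq_or_lt_of_le hy with h | h
      · rw [← h]; norm_num
      · have h1le : 1 ≤ p.1 := by
          push_neg at hc; exact hc h
        have hmin : min 1 (p.1 ^ 2) = 1 := min_eq_left (by nlinarith)
        rw [hmin, mul_one, abs_le]
        constructor
        · have := le_max_left 1 (q ^ 2 / 2); linarith
        · have := le_max_left 1 (q ^ 2 / 2); linarith
  · apply Measure.integrableOn_of_bounded h1.ne hmeas.aestronglyMeasurable (M := 2 + q)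
    rw [ae_restrict_iff' meas_S1]
    filter_upwards with p hp
    obtain ⟨hy, -⟩ := hp
    simp only [mem_Ici] at hy
    have hexp1 : Real.exp (-q * p.1) ≤ 1 := by
      rw [Real.exp_le_one_iff]; nlinarith
    have hexp0 : 0 < Real.exp (-q * p.1) := Real.exp_pos _
    have hrk0 : 0 < r ^ p.2 := pow_pos hr0 _
    have hrk1 : r ^ p.2 ≤ 1 := pow_le_one₀ hr0.le hr1.le
    have hprod : Real.exp (-q * p.1) * r ^ p.2 ≤ 1 := by nlinarith
    have hprod0 : 0 < Real.exp (-q * p.1) * r ^ p.2 := by positivity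
    rw [Real.norm_eq_abs, abs_le]
    split_ifs with hc
    · constructor <;> nlinarith [hc.1, hc.2, hq]
    · constructor <;> nlinarith [hq]

lemma integrableOn_h_rho {q r : ℝ} (hq : 0 < q) (hr0 : 0 < r) (hr1 : r < 1)
    (ρm : Measure (ℝ × ℕ))
    (h0 : IntegrableOn (fun p : ℝ × ℕ => min 1 p.1) (Ici (0:ℝ) ×ˢ ({0} : Set ℕ)) ρm)
    (h1 : ρm (Ici (0:ℝ) ×ˢ {k : ℕ | 1 ≤ k}) < ⊤) :
    IntegrableOn (fun p : ℝ × ℕ => Real.exp (-q * p.1) * r ^ p.2 - 1)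
      (Ici (0:ℝ) ×ˢ (univ : Set ℕ)) ρm := by
  have hmeas : Measurable (fun p : ℝ × ℕ => Real.exp (-q * p.1) * r ^ p.2 - 1) :=
    ((measurable_fst.const_mul (-q)).exp.mul
      ((measurable_from_top (f := fun k : ℕ => (r : ℝ) ^ k)).comp measurable_snd)).sub
      measurable_const
  rw [prod_univ_decomp]
  apply IntegrableOn.union
  · apply Integrable.mono' (h0.const_mul (max 1 q)) hmeas.aestronglyMeasurable.restrict
    rw [ae_restrict_iff' meas_S0]
    filter_upwards with p hp
    obtain ⟨hy, hk⟩ := hp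
    simp only [mem_singleton_iff] at hk
    simp only [mem_Ici] at hy
    rw [hk, pow_zero, mul_one, Real.norm_eq_abs]
    have hexp1 : Real.exp (-q * p.1) ≤ 1 := by
      rw [Real.exp_le_one_iff]; nlinarith
    have h3 : 1 - q * p.1 ≤ Real.exp (-q * p.1) := by
      have := Real.add_one_le_exp (-q * p.1); linarith
    rw [abs_of_nonpos (by linarith), neg_sub]
    rcases le_or_gt p.1 1 with h | h
    · have hmin : min 1 p.1 = p.1 := min_eq_right (by linarith)
      rw [hmin]
      have : q * p.1 ≤ max 1 q * p.1 := mul_le_mul_of_nonneg_right (le_max_right _ _) hy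
      linarith
    · have hmin : min 1 p.1 = 1 := min_eq_left (by linarith)
      rw [hmin, mul_one]
      have h4 := le_max_left 1 q
      have h5 : 0 < Real.exp (-q * p.1) := Real.exp_pos _
      linarith
  · apply Measure.integrableOn_of_bounded h1.ne hmeas.aestronglyMeasurable (M := 2)
    rw [ae_restrict_iff' meas_S1]
    filter_upwards with p hp
    obtain ⟨hy, -⟩ := hp
    simp only [mem_Ici] at hy
    have hexp1 : Real.exp (-q * p.1) ≤ 1 := by
      rw [Real.exp_le_one_iff]; nlinarith
    have hexp0 : 0 < Real.exp (-q * p.1) := Real.exp_pos _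
    have hrk0 : 0 < r ^ p.2 := pow_pos hr0 _
    have hrk1 : r ^ p.2 ≤ 1 := pow_le_one₀ hr0.le hr1.le
    rw [Real.norm_eq_abs, abs_le]
    constructor <;> nlinarith

/-- Admissibility of the parameters `(γ; b, σ, d, κ, 𝗄; π, ρ)`. -/
def Admissible (γ b σ d κ kk : ℝ) (π ρm : Measure (ℝ × ℕ)) : Prop :=
  0 ≤ b ∧ 0 ≤ σ ∧ 0 ≤ d ∧ 0 ≤ κ ∧ 0 ≤ kk ∧
  IntegrableOn (fun p : ℝ × ℕ => min 1 (p.1 ^ 2)) (Ici (0 : ℝ) ×ˢ ({0} : Set ℕ)) π ∧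
  π (Ici (0 : ℝ) ×ˢ {k : ℕ | 1 ≤ k}) < ⊤ ∧
  IntegrableOn (fun p : ℝ × ℕ => min 1 p.1) (Ici (0 : ℝ) ×ˢ ({0} : Set ℕ)) ρm ∧
  ρm (Ici (0 : ℝ) ×ˢ {k : ℕ | 1 ≤ k}) < ⊤

/-- `Ψ_c(q,r)`. -/
noncomputable def PsiC (γ σ κ : ℝ) (π : Measure (ℝ × ℕ)) (q r : ℝ) : ℝ :=
  (∫ p in Ici (0 : ℝ) ×ˢ (univ : Set ℕ),
      (Real.exp (-q * p.1) * r ^ p.2 - 1 + (if 0 < p.1 ∧ p.1 < 1 then q * p.1 else 0)) ∂π)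
    - γ * q + σ ^ 2 / 2 * q ^ 2 - κ

/-- `Ψ_d(q,r)`. -/
noncomputable def PsiD (b d kk : ℝ) (ρm : Measure (ℝ × ℕ)) (q r : ℝ) : ℝ :=
  (∫ p in Ici (0 : ℝ) ×ˢ (univ : Set ℕ),
      (Real.exp (-q * p.1) * r ^ (p.2 + 1) - r) ∂ρm)
    - b * q * r + d * (1 - r) - kk * r

/-- The operator `ℒ`, expressed with supplied first and second `x`-derivatives `f'`, `f''`. -/
noncomputable def Lop (γ b σ d κ kk : ℝ) (π ρm : Measure (ℝ × ℕ))
    (f f' f'' : ℝ → ℕ → ℝ) (x : ℝ) (ℓ : ℕ) : ℝ :=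
  γ * x * f' x ℓ + b * (ℓ : ℝ) * f' x ℓ + σ ^ 2 / 2 * x * f'' x ℓ
    - κ * x * f x ℓ - kk * (ℓ : ℝ) * f x ℓ
    + x * ∫ p in Ici (0 : ℝ) ×ˢ (univ : Set ℕ),
        (f (x + p.1) (ℓ + p.2) - f x ℓ -
          (if 0 < p.1 ∧ p.1 < 1 then p.1 * f' x ℓ else 0)) ∂π
    + (ℓ : ℝ) * ∫ p in Ici (0 : ℝ) ×ˢ (univ : Set ℕ),
        (f (x + p.1) (ℓ + p.2) - f x ℓ) ∂ρm
    + d * (ℓ : ℝ) * (f x (ℓ - 1) - f x ℓ)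

/-- For `f_{q,r}(x,ℓ) = e^{−qx}r^ℓ` one has
`ℒf_{q,r}(x,ℓ) = x e^{−qx} r^ℓ Ψ_c(q,r) + ℓ e^{−qx} r^{ℓ−1} Ψ_d(q,r)`,
all series and integrals involved converging absolutely. -/
theorem Lop_apply_fqr
    (γ b σ d κ kk : ℝ) (π ρm : Measure (ℝ × ℕ))
    (hadm : Admissible γ b σ d κ kk π ρm)
    (q r : ℝ) (hq : 0 < q) (hr : r ∈ Ioo (0 : ℝ) 1)
    (x : ℝ) (hx : 0 ≤ x) (ℓ : ℕ) :
    IntegrableOn (fun p : ℝ × ℕ =>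
        Real.exp (-q * (x + p.1)) * r ^ (ℓ + p.2) - Real.exp (-q * x) * r ^ ℓ -
          (if 0 < p.1 ∧ p.1 < 1 then p.1 * (-q * Real.exp (-q * x) * r ^ ℓ) else 0))
      (Ici (0 : ℝ) ×ˢ (univ : Set ℕ)) π ∧
    IntegrableOn (fun p : ℝ × ℕ =>
        Real.exp (-q * (x + p.1)) * r ^ (ℓ + p.2) - Real.exp (-q * x) * r ^ ℓ)
      (Ici (0 : ℝ) ×ˢ (univ : Set ℕ)) ρm ∧
    IntegrableOn (fun p : ℝ × ℕ =>
        Real.exp (-q * p.1) * r ^ p.2 - 1 + (if 0 < p.1 ∧ p.1 < 1 then q * p.1 else 0))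
      (Ici (0 : ℝ) ×ˢ (univ : Set ℕ)) π ∧
    IntegrableOn (fun p : ℝ × ℕ =>
        Real.exp (-q * p.1) * r ^ (p.2 + 1) - r)
      (Ici (0 : ℝ) ×ˢ (univ : Set ℕ)) ρm ∧
    Lop γ b σ d κ kk π ρm
        (fun z m => Real.exp (-q * z) * r ^ m)
        (fun z m => -q * Real.exp (-q * z) * r ^ m)
        (fun z m => q ^ 2 * Real.exp (-q * z) * r ^ m) x ℓ
      = x * Real.exp (-q * x) * r ^ ℓ * PsiC γ σ κ π q r +
          (ℓ : ℝ) * Real.exp (-q * x) * r ^ (ℓ - 1) * PsiD b d kk ρm q r := by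
  obtain ⟨hb, hσ, hd, hκ, hkk, hπ0, hπ1, hρ0, hρ1⟩ := hadm
  obtain ⟨hr0, hr1⟩ := hr
  have hgint := integrableOn_g_pi hq hr0 hr1 π hπ0 hπ1
  have hhint := integrableOn_h_rho hq hr0 hr1 ρm hρ0 hρ1
  have hπeq : (fun p : ℝ × ℕ =>
      Real.exp (-q * (x + p.1)) * r ^ (ℓ + p.2) - Real.exp (-q * x) * r ^ ℓ -
        (if 0 < p.1 ∧ p.1 < 1 then p.1 * (-q * Real.exp (-q * x) * r ^ ℓ) else 0)) =
      fun p : ℝ × ℕ => (Real.exp (-q * x) * r ^ ℓ) *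
        (Real.exp (-q * p.1) * r ^ p.2 - 1 + (if 0 < p.1 ∧ p.1 < 1 then q * p.1 else 0)) := by
    funext p
    rw [show -q * (x + p.1) = -q * x + -q * p.1 by ring, Real.exp_add, pow_add]
    split_ifs <;> ring
  have hρeq : (fun p : ℝ × ℕ =>
      Real.exp (-q * (x + p.1)) * r ^ (ℓ + p.2) - Real.exp (-q * x) * r ^ ℓ) =
      fun p : ℝ × ℕ => (Real.exp (-q * x) * r ^ ℓ) * (Real.exp (-q * p.1) * r ^ p.2 - 1) := by
    funext p
    rw [show -q * (x + p.1) = -q * x + -q * p.1 by ring, Real.exp_add, pow_add]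
    ring
  have hρ2eq : (fun p : ℝ × ℕ => Real.exp (-q * p.1) * r ^ (p.2 + 1) - r) =
      fun p : ℝ × ℕ => r * (Real.exp (-q * p.1) * r ^ p.2 - 1) := by
    funext p; rw [pow_succ]; ring
  refine ⟨?_, ?_, hgint, ?_, ?_⟩
  · rw [hπeq]; exact hgint.const_mul _
  · rw [hρeq]; exact hhint.const_mul _
  · rw [hρ2eq]; exact hhint.const_mul _
  · simp only [Lop, PsiC, PsiD]
    rw [hπeq, hρeq, hρ2eq, integral_const_mul, integral_const_mul, integral_const_mul]
    cases ℓ with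
    | zero => norm_num; ring
    | succ m =>
      simp only [Nat.add_sub_cancel, pow_succ]
      push_cast
      ring
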